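/- Let X₁, X₂, X₃ be smooth vector fields on a manifold N with X₁ ∧ X₂ ∧ X₃ ≠ 0 everywhere, and suppose there exist nonvanishing smooth functions f₁, f₂, f₃ such that Zᵢ := fᵢXᵢ form a real Lie algebra. Then the family {X₁,X₂,X₃} is quasi-rectifiable (i.e. [Xᵢ,Xⱼ] ∈ span_{C^∞}{Xᵢ,Xⱼ} for all i<j) if and only if the basis {Z₁,Z₂,Z₃} of the Lie algebra is quasi-rectifiable (i.e. [Zᵢ,Zⱼ] ∈ span_ℝ{Zᵢ,Zⱼ} for all i<j). -/

import Mathlib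

noncomputable section

/-- Lie bracket of vector fields on `ℝⁿ`: `[X,Y] = (DY)X − (DX)Y`. -/
def bracket {n : ℕ} (X Y : (Fin n → ℝ) → (Fin n → ℝ)) : (Fin n → ℝ) → (Fin n → ℝ) :=
  fun p => fderiv ℝ Y p (X p) - fderiv ℝ X p (Y p)

lemma bracket_smul {n : ℕ} (f g : (Fin n → ℝ) → ℝ) (X Y : (Fin n → ℝ) → (Fin n → ℝ))
    (hf : ContDiff ℝ (⊤ : ℕ∞) f) (hg : ContDiff ℝ (⊤ : ℕ∞) g)
    (hX : ContDiff ℝ (⊤ : ℕ∞) X) (hY : ContDiff ℝ (⊤ : ℕ∞) Y) (p : Fin n → ℝ) :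
    bracket (fun q => f q • X q) (fun q => g q • Y q) p
      = (f p * g p) • bracket X Y p + (f p * fderiv ℝ g p (X p)) • Y p
        - (g p * fderiv ℝ f p (Y p)) • X p := by
  simp only [bracket]
  rw [fderiv_fun_smul ((hg.differentiable (by simp)) p) ((hY.differentiable (by simp)) p),
      fderiv_fun_smul ((hf.differentiable (by simp)) p) ((hX.differentiable (by simp)) p)]
  simp only [ContinuousLinearMap.add_apply, ContinuousLinearMap.smul_apply,
    ContinuousLinearMap.smulRight_apply, map_smul, smul_smul]
  module

/-- key step: the structure constant of the "third" field vanishes. -/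
lemma ck_zero {n : ℕ}
    (X : Fin 3 → (Fin n → ℝ) → (Fin n → ℝ))
    (f : Fin 3 → (Fin n → ℝ) → ℝ)
    (Z : Fin 3 → (Fin n → ℝ) → (Fin n → ℝ))
    (hXsmooth : ∀ i, ContDiff ℝ (⊤ : ℕ∞) (X i))
    (hfsmooth : ∀ i, ContDiff ℝ (⊤ : ℕ∞) (f i))
    (hfne : ∀ i p, f i p ≠ 0)
    (hindep : ∀ p, LinearIndependent ℝ (fun i => X i p))
    (hZ : ∀ i, Z i = fun p => f i p • X i p)
    (i j k : Fin 3) (hki : k ≠ i) (hkj : k ≠ j)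
    (c : Fin 3 → ℝ)
    (hc : bracket (Z i) (Z j) = fun p => ∑ m, c m • Z m p)
    (a b : (Fin n → ℝ) → ℝ)
    (hab : bracket (X i) (X j) = fun p => a p • X i p + b p • X j p) :
    c k = 0 := by
  set p : Fin n → ℝ := 0 with hp
  have e := congrFun hc p
  simp only [hZ] at e
  rw [bracket_smul (f i) (f j) (X i) (X j) (hfsmooth i) (hfsmooth j)
    (hXsmooth i) (hXsmooth j) p, congrFun hab p] at e
  set α : ℝ := f i p * f j p * a p - f j p * fderiv ℝ (f i) p (X j p) with hα
  set β : ℝ := f i p * f j p * b p + f i p * fderiv ℝ (f j) p (X i p) with hβ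
  have e' : ∑ m, (c m * f m p) • X m p = α • X i p + β • X j p := by
    simp only [smul_smul] at e
    rw [← e, hα, hβ]
    match_scalars <;> ring
  set g : Fin 3 → ℝ := fun m =>
    c m * f m p - (if m = i then α else 0) - (if m = j then β else 0) with hg
  have hsum : ∑ m, g m • X m p = 0 := by
    simp only [hg, sub_smul, ite_smul, zero_smul, Finset.sum_sub_distrib]
    rw [e']
    simp [Finset.sum_ite_eq']
  have h0 := Fintype.linearIndependent_iff.mp (hindep p) g hsum k
  simp only [hg, hki, hkj, if_neg, ite_false, sub_zero] at h0
  exact (mul_eq_zero.mp h0).resolve_right (hfne k p)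

/-- Let `X₁, X₂, X₃` be smooth, everywhere linearly independent vector fields, and
`Zᵢ = fᵢXᵢ` with smooth nonvanishing `fᵢ` forming a real Lie algebra (constant
structure coefficients).  Then `{X₁,X₂,X₃}` is quasi-rectifiable (pairwise brackets in
the `C^∞`-span of the pair) iff the basis `{Z₁,Z₂,Z₃}` is quasi-rectifiable (pairwise
brackets in the `ℝ`-span of the pair). -/
theorem quasirectifiable_iff_rescaled (n : ℕ)
    (X : Fin 3 → (Fin n → ℝ) → (Fin n → ℝ))
    (f : Fin 3 → (Fin n → ℝ) → ℝ)
    (Z : Fin 3 → (Fin n → ℝ) → (Fin n → ℝ))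
    (hXsmooth : ∀ i, ContDiff ℝ (⊤ : ℕ∞) (X i))
    (hfsmooth : ∀ i, ContDiff ℝ (⊤ : ℕ∞) (f i))
    (hfne : ∀ i p, f i p ≠ 0)
    (hindep : ∀ p, LinearIndependent ℝ (fun i => X i p))
    (hZ : ∀ i, Z i = fun p => f i p • X i p)
    (hLie : ∀ i j, ∃ c : Fin 3 → ℝ,
      bracket (Z i) (Z j) = fun p => ∑ k, c k • Z k p) :
    (∀ i j : Fin 3, i < j →
      ∃ a b : (Fin n → ℝ) → ℝ, ContDiff ℝ (⊤ : ℕ∞) a ∧ ContDiff ℝ (⊤ : ℕ∞) b ∧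
        bracket (X i) (X j) = fun p => a p • X i p + b p • X j p) ↔
    (∀ i j : Fin 3, i < j →
      ∃ a b : ℝ, bracket (Z i) (Z j) = fun p => a • Z i p + b • Z j p) := by
  constructor
  · intro H i j hij
    obtain ⟨c, hc⟩ := hLie i j
    obtain ⟨a, b, _, _, hab⟩ := H i j hij
    refine ⟨c i, c j, ?_⟩
    rw [hc]
    have key : ∀ k : Fin 3, k ≠ i → k ≠ j → c k = 0 := fun k hki hkj =>
      ck_zero X f Z hXsmooth hfsmooth hfne hindep hZ i j k hki hkj c hc a b hab
    funext p
    rw [Fin.sum_univ_three]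
    fin_cases i <;> fin_cases j <;> (try exact absurd hij (by decide))
    · rw [key 2 (by decide) (by decide)]; simp
    · rw [key 1 (by decide) (by decide)]; simp
    · rw [key 0 (by decide) (by decide)]; simp
  · intro H i j hij
    obtain ⟨A, B, h⟩ := H i j hij
    have hD : ∀ i j : Fin 3, ContDiff ℝ (⊤ : ℕ∞) (fun p => fderiv ℝ (f i) p (X j p)) :=
      fun i j => ((hfsmooth i).fderiv_right (by simp)).clm_apply (hXsmooth j)
    have hden : ContDiff ℝ (⊤ : ℕ∞) (fun p => f i p * f j p) := (hfsmooth i).mul (hfsmooth j)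
    have hdne : ∀ p, f i p * f j p ≠ 0 := fun p => mul_ne_zero (hfne i p) (hfne j p)
    refine ⟨fun p => (A * f i p + f j p * fderiv ℝ (f i) p (X j p)) / (f i p * f j p),
        fun p => (B * f j p - f i p * fderiv ℝ (f j) p (X i p)) / (f i p * f j p),
        ((contDiff_const.mul (hfsmooth i)).add ((hfsmooth j).mul (hD i j))).div hden hdne,
        ((contDiff_const.mul (hfsmooth j)).sub ((hfsmooth i).mul (hD j i))).div hden hdne,
        ?_⟩
    funext p
    apply smul_right_injective (Fin n → ℝ) (hdne p)
    have e := congrFun h p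
    simp only [hZ] at e
    rw [bracket_smul (f i) (f j) (X i) (X j) (hfsmooth i) (hfsmooth j)
      (hXsmooth i) (hXsmooth j) p] at e
    have e3 : (f i p * f j p) • bracket (X i) (X j) p
        = A • (f i p • X i p) + B • (f j p • X j p)
          + (f j p * fderiv ℝ (f i) p (X j p)) • X i p
          - (f i p * fderiv ℝ (f j) p (X i p)) • X j p := by
      rw [← e]; abel
    show (f i p * f j p) • bracket (X i) (X j) p = _
    rw [e3]
    have hi := hfne i p
    have hj := hfne j p
    match_scalars <;> field_simp
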